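/- arXiv:2111.04977 — 2 statements merged into one kernel-verified Lean document; each statement's English description precedes it below -/
import Mathlib

section
/- Let i ≥ 1 and let S be any nearest-neighbour path in 2^{−n}ℤ³ started at the origin, defined at least up to time t_S(a_{i+1}) < ∞, for which the events F_i and G_i hold (as deterministic conditions on the path). Then len(ξ_i) ≤ len(ξ₀) + Σ_{l=1}^{i} ( len(λ_l) + |ξ_i ∩ H(a_l − q, a_l + q]| ) = len(ξ'_i) + Σ_{l=1}^{i} |ξ_i ∩ H(a_l − q, a_l + q]|, where |D| denotes the number of points of D ∩ 2^{−n}ℤ³. -/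
/-
On `F_i ∩ G_i` the nice cut time `c_l` of `Q_l^m` is a cut time of the whole path
`S[0, t(a_{i+1})]`: up to `c_l` the walk stays left of `a_l + q`, between `c_l` and `t(a_{l+1})`
right of `a_l`, and in the later windows right of `a_{l+1} - q`. Cutting there splits the loop
erasure as `LE(S[0, c_l]) ⊕ LE(S[c_l + 1, t(a_{l+1})])`, and the second piece is also the tail of
`λ_l`. The points of `LE(S[0, c_l])` not already in `ξ_{l-1}` lie in
`S(t(a_l), c_l] ⊂ H(a_l - q, a_l + q]`, and they are points of `ξ_i`. Hence
`len ξ_l ≤ len ξ_{l-1} + len λ_l + |ξ_i ∩ H(a_l - q, a_l + q]|`, which sums to the claim.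
The walk crosses the levels `a_l` and `a_l + q` exactly because `2^{-n} < 2^{-m-m₀}` makes them
lattice levels.
-/

open MeasureTheory ProbabilityTheory Filter Set
open scoped ENNReal NNReal

noncomputable section

local instance : DecidableEq E3 := Classical.decEq _

/-- `ℝ³` with the Euclidean norm. -/
abbrev E3 := EuclideanSpace ℝ (Fin 3)

/-- `x` is a point of the rescaled lattice `2^{-n} ℤ³`. -/
def IsLatticePoint (n : ℕ) (x : E3) : Prop :=
  ∀ i : Fin 3, ∃ z : ℤ, x i = (z : ℝ) * (2 : ℝ) ^ (-(n : ℤ))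

/-- The six nearest-neighbour steps of length `2^{-n}`. -/
def nbhdSteps (n : ℕ) : Finset E3 :=
  (Finset.univ : Finset (Fin 3 × Bool)).image
    fun p => (if p.2 then (2 : ℝ) ^ (-(n : ℤ)) else -((2 : ℝ) ^ (-(n : ℤ)))) •
      EuclideanSpace.single p.1 (1 : ℝ)

/-- The uniform distribution on the six nearest-neighbour steps of length `2^{-n}`. -/
def stepLaw (n : ℕ) : Measure E3 :=
  ((nbhdSteps n).card : ℝ≥0∞)⁻¹ • ∑ v ∈ nbhdSteps n, Measure.dirac v

/-- `S` is a simple random walk on `2^{-n} ℤ³` started at `x₀`, under the probability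
measure `P`: it starts at `x₀` and has i.i.d. increments, uniform on the six
nearest-neighbour steps of length `2^{-n}`. -/
structure IsSRW {Ω : Type*} [MeasurableSpace Ω] (P : Measure Ω) (n : ℕ) (x₀ : E3)
    (S : ℕ → Ω → E3) : Prop where
  isProb : IsProbabilityMeasure P
  meas : ∀ k, Measurable (S k)
  init : ∀ ω, S 0 ω = x₀
  indep : iIndepFun (fun k ω => S (k + 1) ω - S k ω) P
  law : ∀ k, P.map (fun ω => S (k + 1) ω - S k ω) = stepLaw n

/-- First exit time of the path `w` from the (open) ball `B(x, r)`:
the first `k` with `‖w k - x‖ ≥ r` (with the convention `sInf ∅ = 0`). -/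
def exitTime (w : ℕ → E3) (x : E3) (r : ℝ) : ℕ :=
  sInf {k | r ≤ ‖w k - x‖}

/-- The times `s₀, s₁, s₂, …` of the chronological loop erasure of the path
`w(0), …, w(m)`:  `s₀ = max{j ≤ m : w j = w 0}` and
`s_{i+1} = max{j ≤ m : w j = w (s_i + 1)}`. -/
def leTime (w : ℕ → E3) (m : ℕ) : ℕ → ℕ
  | 0 => sSup {j | j ≤ m ∧ w j = w 0}
  | i + 1 => sSup {j | j ≤ m ∧ w j = w (leTime w m i + 1)}

/-- The length of the loop erasure `LE(w[0,m])`, i.e. `min{i : w (s_i) = w m}`. -/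
def leLen (w : ℕ → E3) (m : ℕ) : ℕ :=
  sInf {i | w (leTime w m i) = w m}

/-- The loop erasure `LE(w[0,m])` as a function of (discrete) time:
`LE(w[0,m])(i) = w (s_i)`. -/
def leFun (w : ℕ → E3) (m : ℕ) (i : ℕ) : E3 :=
  w (leTime w m i)

/-- First exit time from the unit ball. -/
def walkExitUnit (w : ℕ → E3) : ℕ := exitTime w 0 1

/-- Length `M_n` of the loop-erased random walk `γ_n = LE (S[0, T₁])`. -/
def lerwLen (w : ℕ → E3) : ℕ := leLen w (walkExitUnit w)

/-- The loop-erased random walk `γ_n = LE (S[0, T₁])` across the unit ball. -/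
def lerwFun (w : ℕ → E3) : ℕ → E3 := leFun w (walkExitUnit w)

end
noncomputable section

/-- The greedy sequence of `r`-displacement times of the path `w(0), …, w(m)`:
`σ₀ = 0` and `σ_{l+1} = inf{σ_l ≤ j ≤ m : ‖w j - w (σ_l)‖ ≥ r}`. -/
def hitSeq (w : ℕ → E3) (m : ℕ) (r : ℝ) : ℕ → ℕ
  | 0 => 0
  | l + 1 => sInf {j | hitSeq w m r l ≤ j ∧ j ≤ m ∧ r ≤ ‖w j - w (hitSeq w m r l)‖}

/-- The number of `r`-displacement times of the path `w(0), …, w(m)`: the largest `l`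
such that `σ_l` is well defined (i.e. all the defining sets up to step `l` are
nonempty, equivalently the greedy sequence is strictly increasing up to `l`). -/
def hitCount (w : ℕ → E3) (m : ℕ) (r : ℝ) : ℕ :=
  sSup {l | ∀ i < l, hitSeq w m r i < hitSeq w m r (i + 1)}

/-- Linear interpolation of a discrete path `g` at a real time `t`. -/
def interp (g : ℕ → E3) (t : ℝ) : E3 :=
  (1 - (t - ⌊t⌋₊)) • g ⌊t⌋₊ + (t - ⌊t⌋₊) • g (⌊t⌋₊ + 1)

/-- A parametrized curve: a time duration together with a function of time. -/
structure Curve where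
  dur : ℝ
  toFun : ℝ → E3

/-- A curve is *nice* if its duration is nonnegative, it is continuous, it takes
values in the closed unit ball and it is determined by its values on `[0, dur]`. -/
def Curve.IsNice (c : Curve) : Prop :=
  0 ≤ c.dur ∧ Continuous c.toFun ∧ (∀ t, ‖c.toFun t‖ ≤ 1) ∧
    ∀ t, c.toFun t = c.toFun (max 0 (min t c.dur))

/-- The metric `ρ(λ₁, λ₂) = |t_{λ₁} - t_{λ₂}| + max_{0 ≤ s ≤ 1} |λ₁(s t_{λ₁}) - λ₂(s t_{λ₂})|`
on curves. -/
def curveDist (a b : Curve) : ℝ :=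
  |a.dur - b.dur| + ⨆ s : Icc (0:ℝ) 1, ‖a.toFun ((s : ℝ) * a.dur) - b.toFun ((s : ℝ) * b.dur)‖

/-- The time-rescaled loop-erased random walk `η_n(t) = γ_n(2^{βn} t)`,
`0 ≤ t ≤ 2^{-βn} M_n`, as a curve (with `γ_n` linearly interpolated). -/
def lerwCurve (β : ℝ) (n : ℕ) (w : ℕ → E3) : Curve where
  dur := (2 : ℝ) ^ (-(β * n)) * lerwLen w
  toFun := fun t =>
    interp (lerwFun w)
      ((2 : ℝ) ^ (β * n) * max 0 (min t ((2 : ℝ) ^ (-(β * n)) * lerwLen w)))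

end
noncomputable section

/-- `a_i = 2^{-m} (2i - 1)`. -/
def aTube (m : ℕ) (i : ℕ) : ℝ := (2 : ℝ) ^ (-(m : ℤ)) * (2 * (i : ℝ) - 1)

/-- `q = 2^{-m-m₀}`. -/
def qTube (m m₀ : ℕ) : ℝ := (2 : ℝ) ^ (-((m : ℤ) + (m₀ : ℤ)))

/-- The tube `H[a, b]` (side length `2^{-m+1}` in the transverse directions). -/
def slabCC (m : ℕ) (a b : ℝ) : Set E3 :=
  {x | a ≤ x 0 ∧ x 0 ≤ b ∧ |x 1| ≤ (2 : ℝ) ^ (-(m : ℤ)) ∧ |x 2| ≤ (2 : ℝ) ^ (-(m : ℤ))}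

/-- The tube `H(a, b]`. -/
def slabOC (m : ℕ) (a b : ℝ) : Set E3 :=
  {x | a < x 0 ∧ x 0 ≤ b ∧ |x 1| ≤ (2 : ℝ) ^ (-(m : ℤ)) ∧ |x 2| ≤ (2 : ℝ) ^ (-(m : ℤ))}

/-- The square cross-section `H(a)`. -/
def faceH (m : ℕ) (a : ℝ) : Set E3 :=
  {x | x 0 = a ∧ |x 1| ≤ (2 : ℝ) ^ (-(m : ℤ)) ∧ |x 2| ≤ (2 : ℝ) ^ (-(m : ℤ))}

/-- The smaller square cross-section `G(a)`. -/
def faceG (m : ℕ) (a : ℝ) : Set E3 :=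
  {x | x 0 = a ∧ |x 1| ≤ (2 : ℝ) ^ (-(m : ℤ) - 1) ∧ |x 2| ≤ (2 : ℝ) ^ (-(m : ℤ) - 1)}

/-- The hitting time `t_λ(a) = inf{k ≥ 0 : λ(k) ∈ H(a)}` (with `sInf ∅ = 0`). -/
def tFace (m : ℕ) (w : ℕ → E3) (a : ℝ) : ℕ := sInf {k | w k ∈ faceH m a}

/-- `t_λ(a) < ∞`. -/
def hitsFace (m : ℕ) (w : ℕ → E3) (a : ℝ) : Prop := ∃ k, w k ∈ faceH m a

/-- The event `A₀`. -/
def eventA0 (m m₀ : ℕ) (w : ℕ → E3) : Prop :=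
  hitsFace m w (aTube m 1) ∧
  w (tFace m w (aTube m 1)) ∈ faceG m (aTube m 1) ∧
  (∀ k ≤ tFace m w (aTube m 1), w k ∈ slabCC m (aTube m 0) (aTube m 1)) ∧
  ∀ k, tFace m w (aTube m 1 - qTube m m₀) ≤ k → k ≤ tFace m w (aTube m 1) →
    w k ∉ faceH m (aTube m 1 - 2 * qTube m m₀)

/-- The event `A_i`, `i ≥ 1`. -/
def eventAi (m m₀ : ℕ) (w : ℕ → E3) (i : ℕ) : Prop :=
  hitsFace m w (aTube m i) ∧ hitsFace m w (aTube m (i + 1)) ∧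
  tFace m w (aTube m i) < tFace m w (aTube m (i + 1)) ∧
  w (tFace m w (aTube m (i + 1))) ∈ faceG m (aTube m (i + 1)) ∧
  (∀ k, tFace m w (aTube m i) ≤ k → k ≤ tFace m w (aTube m (i + 1)) →
    w k ∈ slabOC m (aTube m i - qTube m m₀) (aTube m (i + 1))) ∧
  ∀ k, tFace m w (aTube m (i + 1) - qTube m m₀) ≤ k → k ≤ tFace m w (aTube m (i + 1)) →
    w k ∈ slabCC m (aTube m (i + 1) - 2 * qTube m m₀) (aTube m (i + 1))

/-- The event `A_i` for all `i ≥ 0`. -/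
def eventA (m m₀ : ℕ) (w : ℕ → E3) : ℕ → Prop
  | 0 => eventA0 m m₀ w
  | i + 1 => eventAi m m₀ w (i + 1)

/-- `k` is a nice cut time of `w` in `Q_i^m`. -/
def NiceCutTime (m m₀ : ℕ) (w : ℕ → E3) (i k : ℕ) : Prop :=
  tFace m w (aTube m i + qTube m m₀ / 2) ≤ k ∧ k ≤ tFace m w (aTube m i + qTube m m₀) ∧
  (∀ j₁ j₂, tFace m w (aTube m i) ≤ j₁ → j₁ ≤ k → k + 1 ≤ j₂ →
    j₂ ≤ tFace m w (aTube m (i + 1)) → w j₁ ≠ w j₂) ∧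
  w k ∈ slabCC m (aTube m i + qTube m m₀ / 2) (aTube m i + qTube m m₀) ∧
  ∀ j, k ≤ j → j ≤ tFace m w (aTube m (i + 1)) → w j ∉ faceH m (aTube m i)

/-- The event `B_i`: `w` has a nice cut time in `Q_i^m`. -/
def eventB (m m₀ : ℕ) (w : ℕ → E3) (i : ℕ) : Prop := ∃ k, NiceCutTime m m₀ w i k

/-- The event `F_i = A₀ ∩ ⋯ ∩ A_i`. -/
def eventFtube (m m₀ : ℕ) (w : ℕ → E3) (i : ℕ) : Prop := ∀ j ≤ i, eventA m m₀ w j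

/-- The event `G_i = B₁ ∩ ⋯ ∩ B_i`. -/
def eventGtube (m m₀ : ℕ) (w : ℕ → E3) (i : ℕ) : Prop :=
  ∀ j, 1 ≤ j → j ≤ i → eventB m m₀ w j

/-- The length of `ξ_i = LE(w[0, t_w(a_{i+1})])`. -/
def xiLen (m : ℕ) (w : ℕ → E3) (i : ℕ) : ℕ := leLen w (tFace m w (aTube m (i + 1)))

/-- The path `ξ_i = LE(w[0, t_w(a_{i+1})])`. -/
def xiFun (m : ℕ) (w : ℕ → E3) (i : ℕ) : ℕ → E3 := leFun w (tFace m w (aTube m (i + 1)))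

/-- The length of `λ_i = LE(w[t_w(a_i), t_w(a_{i+1})])`. -/
def lamTubeLen (m : ℕ) (w : ℕ → E3) (i : ℕ) : ℕ :=
  leLen (fun j => w (tFace m w (aTube m i) + j))
    (tFace m w (aTube m (i + 1)) - tFace m w (aTube m i))

/-- The number of points of `ξ_i ∩ H(a_l - q, a_l + q]` (a subset of `2^{-n}ℤ³`). -/
def xiSlabCount (m m₀ : ℕ) (w : ℕ → E3) (i l : ℕ) : ℕ :=
  {x : E3 | x ∈ slabOC m (aTube m l - qTube m m₀) (aTube m l + qTube m m₀) ∧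
    ∃ j ≤ xiLen m w i, xiFun m w i j = x}.ncard

/-- The event `D_i(C)`. -/
def eventD (β : ℝ) (n m : ℕ) (C : ℝ) (w : ℕ → E3) : ℕ → Prop
  | 0 => (xiLen m w 0 : ℝ) ≤ C * (2 : ℝ) ^ (-(β * m)) * (2 : ℝ) ^ (β * n)
  | i + 1 => (lamTubeLen m w (i + 1) : ℝ) ≤ C * (2 : ℝ) ^ (-(β * m)) * (2 : ℝ) ^ (β * n)

end

noncomputable def lastVisit (w : ℕ → E3) (T k : ℕ) : ℕ := sSup {j | j ≤ T ∧ w j = w k}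

def IsCutTime (w : ℕ → E3) (c T : ℕ) : Prop :=
  ∀ j₁ ≤ c, ∀ j₂, c < j₂ → j₂ ≤ T → w j₁ ≠ w j₂

namespace LoopErasure

variable {w : ℕ → E3} {T T' c j k : ℕ}

lemma leTime_succ : leTime w T (j + 1) = lastVisit w T (leTime w T j + 1) := rfl

lemma bddAbove_visits (k : ℕ) : BddAbove {j | j ≤ T ∧ w j = w k} := ⟨T, fun _ h => h.1⟩

lemma le_lastVisit (hj : j ≤ T) (hw : w j = w k) : j ≤ lastVisit w T k :=
  le_csSup (bddAbove_visits k) ⟨hj, hw⟩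

lemma lastVisit_mem (hk : k ≤ T) : lastVisit w T k ≤ T ∧ w (lastVisit w T k) = w k :=
  Nat.sSup_mem (⟨k, hk, rfl⟩ : {j | j ≤ T ∧ w j = w k}.Nonempty) (bddAbove_visits k)

lemma lastVisit_eq {s : ℕ} (hs : s ≤ T) (hw : w s = w k) (hmax : ∀ j ≤ T, w j = w k → j ≤ s) :
    lastVisit w T k = s :=
  le_antisymm (csSup_le' fun j hj => hmax j hj.1 hj.2) (le_lastVisit hs hw)

lemma lastVisit_eq_of_lastVisit_le (hk : k ≤ T') (hT : T' ≤ T) (h : lastVisit w T k ≤ T') :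
    lastVisit w T' k = lastVisit w T k :=
  lastVisit_eq h (lastVisit_mem (hk.trans hT)).2 fun _ hj hw => le_lastVisit (hj.trans hT) hw

lemma lastVisit_eq_add_lastVisit_shift (hck : c < k) (hkT : k ≤ T) (hnew : ∀ j ≤ c, w j ≠ w k) :
    lastVisit w T k = c + 1 + lastVisit (fun j => w (c + 1 + j)) (T - c - 1) (k - c - 1) := by
  have hk' : k - c - 1 ≤ T - c - 1 := by omega
  obtain ⟨hle, hw⟩ := lastVisit_mem (w := fun j => w (c + 1 + j)) hk'
  refine lastVisit_eq (by omega) (hw.trans (congrArg w (by omega))) fun j hj hjw => ?_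
  have hcj : c < j := lt_of_not_ge fun h => hnew j h hjw
  have := le_lastVisit (w := fun j => w (c + 1 + j)) (T := T - c - 1) (k := k - c - 1)
    (j := j - c - 1) (by omega) (show w (c + 1 + (j - c - 1)) = w (c + 1 + (k - c - 1)) by
      rw [show c + 1 + (j - c - 1) = j by omega, show c + 1 + (k - c - 1) = k by omega, hjw])
  omega

lemma le_leTime_and_exists_eq_lastVisit (hne : ∀ j' < j, w (leTime w T j') ≠ w T) :
    j ≤ leTime w T j ∧ ∃ k ≤ T, leTime w T j = lastVisit w T k := by
  induction j with
  | zero => exact ⟨Nat.zero_le _, 0, Nat.zero_le T, rfl⟩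
  | succ j ih =>
    obtain ⟨hj, k, hk, hjk⟩ := ih fun j' hj' => hne j' (hj'.trans j.lt_succ_self)
    have hlt : leTime w T j < T := lt_of_le_of_ne (hjk ▸ (lastVisit_mem hk).1)
      fun h => hne j j.lt_succ_self (by rw [h])
    exact ⟨(Nat.succ_le_succ hj).trans (le_lastVisit hlt rfl), _, hlt, leTime_succ⟩

lemma exists_apply_leTime_eq : ∃ j, w (leTime w T j) = w T := by
  by_contra! hne
  obtain ⟨hj, k, hk, hjk⟩ := le_leTime_and_exists_eq_lastVisit (j := T + 1) fun j _ => hne j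
  have := (lastVisit_mem (w := w) hk).1
  omega

lemma apply_leTime_leLen : w (leTime w T (leLen w T)) = w T :=
  Nat.sInf_mem exists_apply_leTime_eq

lemma apply_leTime_ne (hj : j < leLen w T) : w (leTime w T j) ≠ w T :=
  Nat.notMem_of_lt_sInf hj

lemma exists_leTime_eq_lastVisit (hj : j ≤ leLen w T) :
    ∃ k ≤ T, leTime w T j = lastVisit w T k :=
  (le_leTime_and_exists_eq_lastVisit fun _ h => apply_leTime_ne (h.trans_le hj)).2

lemma leTime_le (hj : j ≤ leLen w T) : leTime w T j ≤ T := by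
  obtain ⟨k, hk, h⟩ := exists_leTime_eq_lastVisit hj
  exact h ▸ (lastVisit_mem hk).1

lemma le_leTime (hj : j ≤ leLen w T) (hk : k ≤ T) (hw : w k = w (leTime w T j)) :
    k ≤ leTime w T j := by
  obtain ⟨k', hk', h⟩ := exists_leTime_eq_lastVisit hj
  rw [h] at hw ⊢
  exact le_lastVisit hk (hw.trans (lastVisit_mem hk').2)

lemma leTime_leLen : leTime w T (leLen w T) = T :=
  le_antisymm (leTime_le le_rfl) (le_leTime le_rfl le_rfl apply_leTime_leLen.symm)

lemma leTime_lt (hj : j < leLen w T) : leTime w T j < T :=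
  lt_of_le_of_ne (leTime_le hj.le) fun h => apply_leTime_ne hj (by rw [h])

lemma strictMonoOn_leTime : StrictMonoOn (leTime w T) (Set.Iic (leLen w T)) :=
  strictMonoOn_Iic_of_lt_succ fun _ hj => le_lastVisit (leTime_lt hj) rfl

lemma injOn_leFun : Set.InjOn (leFun w T) (Set.Iic (leLen w T)) := by
  intro j hj j' hj' he
  by_contra hne
  wlog hlt : j < j' generalizing j j'
  · exact this hj' hj he.symm (Ne.symm hne) (lt_of_le_of_ne (not_lt.mp hlt) (Ne.symm hne))
  exact (strictMonoOn_leTime hj hj' hlt).not_ge (le_leTime hj (leTime_le hj') he.symm)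

lemma leLen_eq_of_forall_ne {N : ℕ} (hN : w (leTime w T N) = w T)
    (hne : ∀ j < N, w (leTime w T j) ≠ w T) : leLen w T = N :=
  le_antisymm (Nat.sInf_le hN) (not_lt.mp fun h => hne _ h apply_leTime_leLen)

lemma leTime_eq_of_leTime_le (hT : T' ≤ T) (hj : j ≤ leLen w T) (hle : leTime w T j ≤ T') :
    leTime w T' j = leTime w T j ∧ j ≤ leLen w T' := by
  induction j with
  | zero => exact ⟨lastVisit_eq_of_lastVisit_le (Nat.zero_le _) hT hle, Nat.zero_le _⟩
  | succ j ih =>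
    have hlt : leTime w T j < leTime w T (j + 1) :=
      strictMonoOn_leTime (Set.mem_Iic.mpr (by omega)) (Set.mem_Iic.mpr hj) j.lt_succ_self
    obtain ⟨heq, hjL⟩ := ih (by omega) (by omega)
    have hjL' : j < leLen w T' := lt_of_le_of_ne hjL fun h => by
      have := leTime_leLen (w := w) (T := T')
      rw [← h] at this
      omega
    refine ⟨?_, hjL'⟩
    rw [leTime_succ, leTime_succ, heq]
    exact lastVisit_eq_of_lastVisit_le (by omega) hT hle

lemma finite_setOf_leFun (S : Set E3) (w : ℕ → E3) (T : ℕ) :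
    {x | x ∈ S ∧ ∃ j ≤ leLen w T, leFun w T j = x}.Finite :=
  ((Set.finite_Iic (leLen w T)).image (leFun w T)).subset fun _ ⟨_, j, hj, hx⟩ => ⟨j, hj, hx⟩

-- Loop-erasure points of `w[0, c]` outside `S` occur by time `T'`, where the two loop erasures
-- agree.
lemma leLen_le_add_ncard (hT : T' ≤ c) {S : Set E3} (hS : ∀ k, T' < k → k ≤ c → w k ∈ S) :
    leLen w c ≤ leLen w T' + {x | x ∈ S ∧ ∃ j ≤ leLen w c, leFun w c j = x}.ncard := by
  classical
  have hsplit := Finset.card_filter_add_card_filter_not (s := Finset.range (leLen w c + 1))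
    (fun j => leFun w c j ∈ S)
  have hout : (Finset.range (leLen w c + 1)).filter (fun j => leFun w c j ∉ S) ⊆
      Finset.range (leLen w T' + 1) := by
    intro j hj
    simp only [Finset.mem_filter, Finset.mem_range] at hj ⊢
    have hle : leTime w c j ≤ T' :=
      not_lt.mp fun h => hj.2 (hS _ h (leTime_le (by omega)))
    have := (leTime_eq_of_leTime_le hT (by omega) hle).2
    omega
  have hin : ((Finset.range (leLen w c + 1)).filter (fun j => leFun w c j ∈ S)).card ≤
      {x | x ∈ S ∧ ∃ j ≤ leLen w c, leFun w c j = x}.ncard := by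
    rw [← Set.ncard_coe_finset]
    refine Set.ncard_le_ncard_of_injOn (leFun w c) ?_ ?_ (finite_setOf_leFun S w c)
    · intro j hj
      simp only [Finset.coe_filter, Finset.mem_range, Set.mem_ofPred_eq] at hj
      exact ⟨hj.2, j, by omega, rfl⟩
    · refine injOn_leFun.mono fun j hj => ?_
      simp only [Finset.coe_filter, Finset.mem_range, Set.mem_ofPred_eq] at hj
      exact Set.mem_Iic.mpr (by omega)
  have := Finset.card_le_card hout
  simp only [Finset.card_range] at hsplit this
  omega

end LoopErasure

namespace IsCutTime

open LoopErasure

variable {w : ℕ → E3} {T c : ℕ}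

lemma mono {T' : ℕ} (h : IsCutTime w c T) (hT : T' ≤ T) : IsCutTime w c T' :=
  fun j₁ hj₁ j₂ hj₂ hj₂T => h j₁ hj₁ j₂ hj₂ (hj₂T.trans hT)

lemma shift {t : ℕ} (h : IsCutTime w c T) (ht : t ≤ c) :
    IsCutTime (fun j => w (t + j)) (c - t) (T - t) :=
  fun j₁ hj₁ j₂ hj₂ hj₂T => h (t + j₁) (by omega) (t + j₂) (by omega) (by omega)

lemma lastVisit_le (h : IsCutTime w c T) (hcT : c ≤ T) {k : ℕ} (hk : k ≤ c) :
    lastVisit w T k ≤ c := by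
  obtain ⟨hle, hw⟩ := lastVisit_mem (w := w) (hk.trans hcT)
  exact not_lt.mp fun hlt => h k hk _ hlt hle hw.symm

lemma leTime_eq (h : IsCutTime w c T) (hcT : c < T) {j : ℕ} (hj : j ≤ leLen w c) :
    leTime w T j = leTime w c j := by
  induction j with
  | zero => exact (lastVisit_eq_of_lastVisit_le (Nat.zero_le c) hcT.le (h.lastVisit_le hcT.le
      (Nat.zero_le c))).symm
  | succ j ih =>
    have hlt : leTime w c j < c := leTime_lt hj
    rw [leTime_succ, leTime_succ, ih (by omega)]
    exact (lastVisit_eq_of_lastVisit_le hlt hcT.le (h.lastVisit_le hcT.le hlt)).symm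

lemma leTime_add (h : IsCutTime w c T) (hcT : c < T) {r : ℕ}
    (hr : r ≤ leLen (fun j => w (c + 1 + j)) (T - c - 1)) :
    leTime w T (leLen w c + 1 + r) = c + 1 + leTime (fun j => w (c + 1 + j)) (T - c - 1) r := by
  have hshift : ∀ k, c < k → k ≤ T → lastVisit w T k =
      c + 1 + lastVisit (fun j => w (c + 1 + j)) (T - c - 1) (k - c - 1) :=
    fun k hck hkT => lastVisit_eq_add_lastVisit_shift hck hkT fun j hj => h j hj k hck hkT
  induction r with
  | zero =>
    rw [Nat.add_zero, leTime_succ, h.leTime_eq hcT le_rfl, leTime_leLen,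
      hshift _ (Nat.lt_add_one c) hcT, Nat.add_sub_cancel_left, Nat.sub_self]
    rfl
  | succ r ih =>
    have hu := leTime_lt hr
    rw [← Nat.add_assoc, leTime_succ, ih (by omega), leTime_succ, hshift _ (by omega) (by omega)]
    congr 2
    omega

lemma leLen_eq (h : IsCutTime w c T) (hcT : c < T) :
    leLen w T = leLen w c + 1 + leLen (fun j => w (c + 1 + j)) (T - c - 1) := by
  refine leLen_eq_of_forall_ne ?_ fun j hj => ?_
  · rw [h.leTime_add hcT le_rfl]
    exact (apply_leTime_leLen (w := fun j => w (c + 1 + j)) (T := T - c - 1)).trans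
      (congrArg w (by omega))
  rcases le_or_gt j (leLen w c) with hjc | hjc
  · rw [h.leTime_eq hcT hjc]
    exact h _ (leTime_le hjc) T hcT le_rfl
  · obtain ⟨r, rfl⟩ : ∃ r, j = leLen w c + 1 + r := ⟨j - (leLen w c + 1), by omega⟩
    rw [h.leTime_add hcT (by omega)]
    exact fun heq => apply_leTime_ne (w := fun j => w (c + 1 + j)) (T := T - c - 1) (by omega)
      (heq.trans (congrArg w (by omega)))

end IsCutTime

-- One window of the decomposition: `t = t(a_l)`, `c = c_l`, `T = t(a_{l+1})`, `U = t(a_{i+1})`.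
open LoopErasure in
lemma leLen_le_of_isCutTime {w : ℕ → E3} {t c T U : ℕ} {S : Set E3} (htc : t ≤ c) (hcT : c < T)
    (hTU : T ≤ U) (hcut : IsCutTime w c U) (hS : ∀ k, t < k → k ≤ c → w k ∈ S) :
    leLen w T ≤ leLen w t + (leLen (fun j => w (t + j)) (T - t) +
      {x | x ∈ S ∧ ∃ j ≤ leLen w U, leFun w U j = x}.ncard) := by
  have hcU : c < U := hcT.trans_le hTU
  have hsplit := (hcut.mono hTU).leLen_eq hcT
  have hwindow := ((hcut.mono hTU).shift htc).leLen_eq (by omega)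
  have htail : (fun k => w (t + (c - t + 1 + k))) = fun k => w (c + 1 + k) :=
    funext fun k => congrArg w (by omega)
  rw [htail, show T - t - (c - t) - 1 = T - c - 1 by omega] at hwindow
  have hprefix : {x | x ∈ S ∧ ∃ j ≤ leLen w c, leFun w c j = x} ⊆
      {x | x ∈ S ∧ ∃ j ≤ leLen w U, leFun w U j = x} := by
    rintro x ⟨hx, j, hj, rfl⟩
    refine ⟨hx, j, ?_, congrArg w (hcut.leTime_eq hcU hj)⟩
    have := hcut.leLen_eq hcU
    omega
  have := Set.ncard_le_ncard hprefix (finite_setOf_leFun S w U)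
  have := leLen_le_add_ncard htc hS
  omega

lemma exists_apply_eq_of_abs_sub_le_one {f : ℕ → ℤ} (hf : ∀ t, |f (t + 1) - f t| ≤ 1) {j k : ℕ}
    (hjk : j ≤ k) {z : ℤ} (hz : z ∈ Set.uIcc (f j) (f k)) : ∃ t ∈ Set.Icc j k, f t = z := by
  induction k, hjk using Nat.le_induction with
  | base =>
    rw [Set.uIcc_self, Set.mem_singleton_iff] at hz
    exact ⟨j, Set.left_mem_Icc.mpr le_rfl, hz.symm⟩
  | succ k hjk ih =>
    by_cases hz' : z ∈ Set.uIcc (f j) (f k)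
    · obtain ⟨t, ht, hft⟩ := ih hz'
      exact ⟨t, ⟨ht.1, ht.2.trans k.le_succ⟩, hft⟩
    · refine ⟨k + 1, ⟨by omega, le_rfl⟩, ?_⟩
      have := abs_le.mp (hf k)
      rw [Set.mem_uIcc] at hz hz'
      omega

noncomputable def dyadicGrid (n : ℕ) : AddSubgroup ℝ :=
  AddSubgroup.zmultiples ((2 : ℝ) ^ (-(n : ℤ)))

lemma two_zpow_neg_mem_dyadicGrid {k n : ℕ} (h : k ≤ n) :
    (2 : ℝ) ^ (-(k : ℤ)) ∈ dyadicGrid n := by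
  refine AddSubgroup.mem_zmultiples_iff.mpr ⟨2 ^ (n - k), ?_⟩
  rw [zsmul_eq_mul, Int.cast_pow, Int.cast_ofNat, ← zpow_natCast, ← zpow_add₀ two_ne_zero]
  congr 1
  omega

def IsNearestNeighbourPath (n : ℕ) (w : ℕ → E3) : Prop :=
  (∀ k, IsLatticePoint n (w k)) ∧ ∀ k, w (k + 1) - w k ∈ nbhdSteps n

lemma abs_apply_le_of_mem_nbhdSteps {n : ℕ} {v : E3} (hv : v ∈ nbhdSteps n) (d : Fin 3) :
    |v d| ≤ (2 : ℝ) ^ (-(n : ℤ)) := by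
  simp only [nbhdSteps, Finset.mem_image, Finset.mem_univ, true_and] at hv
  obtain ⟨⟨d', b⟩, rfl⟩ := hv
  cases b <;> by_cases hd : d = d' <;> simp [hd]

lemma IsNearestNeighbourPath.exists_apply_eq_of_mem_uIcc {n : ℕ} {w : ℕ → E3}
    (hw : IsNearestNeighbourPath n w) (d : Fin 3) {a : ℝ} (ha : a ∈ dyadicGrid n) {j k : ℕ}
    (hjk : j ≤ k) (h : a ∈ Set.uIcc (w j d) (w k d)) : ∃ t ∈ Set.Icc j k, w t d = a := by
  have hδ : (0 : ℝ) < 2 ^ (-(n : ℤ)) := by positivity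
  choose z hz using fun t => hw.1 t d
  obtain ⟨za, rfl⟩ := AddSubgroup.mem_zmultiples_iff.mp ha
  have hstep : ∀ t, |z (t + 1) - z t| ≤ 1 := by
    intro t
    have h1 := abs_apply_le_of_mem_nbhdSteps (hw.2 t) d
    rw [PiLp.sub_apply, hz, hz, ← sub_mul, abs_mul, abs_of_pos hδ] at h1
    exact_mod_cast (mul_le_iff_le_one_left hδ).mp h1
  have hza : za ∈ Set.uIcc (z j) (z k) := by
    rw [hz, hz, zsmul_eq_mul, Set.mem_uIcc, mul_le_mul_iff_of_pos_right hδ,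
      mul_le_mul_iff_of_pos_right hδ, mul_le_mul_iff_of_pos_right hδ,
      mul_le_mul_iff_of_pos_right hδ] at h
    rw [Set.mem_uIcc]
    exact_mod_cast h
  obtain ⟨t, ht, hzt⟩ := exists_apply_eq_of_abs_sub_le_one hstep hjk hza
  exact ⟨t, ht, by rw [hz, hzt, zsmul_eq_mul]⟩

def InTube (m : ℕ) (x : E3) : Prop := |x 1| ≤ (2 : ℝ) ^ (-(m : ℤ)) ∧ |x 2| ≤ (2 : ℝ) ^ (-(m : ℤ))

lemma aTube_succ (m l : ℕ) : aTube m (l + 1) = aTube m l + 2 * (2 : ℝ) ^ (-(m : ℤ)) := by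
  simp only [aTube]
  push_cast
  ring

lemma aTube_mono (m : ℕ) : Monotone (aTube m) := fun l l' h => by
  have : (l : ℝ) ≤ l' := Nat.cast_le.mpr h
  exact mul_le_mul_of_nonneg_left (by linarith) (by positivity)

section Tube

variable {n m m₀ : ℕ} {w : ℕ → E3}

lemma IsNearestNeighbourPath.exists_mem_faceH_of_mem_uIcc (hw : IsNearestNeighbourPath n w)
    {a : ℝ} (ha : a ∈ dyadicGrid n) {j k : ℕ} (hjk : j ≤ k)
    (htube : ∀ t ∈ Set.Icc j k, InTube m (w t)) (h : a ∈ Set.uIcc (w j 0) (w k 0)) :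
    ∃ t ∈ Set.Icc j k, w t ∈ faceH m a := by
  obtain ⟨t, ht, hwt⟩ := hw.exists_apply_eq_of_mem_uIcc 0 ha hjk h
  exact ⟨t, ht, hwt, htube t ht⟩

lemma IsNearestNeighbourPath.coord_le_of_le_tFace (hw : IsNearestNeighbourPath n w) {a : ℝ}
    (ha : a ∈ dyadicGrid n) {k : ℕ} (htube : ∀ t ≤ k, InTube m (w t)) (h0 : w 0 0 ≤ a)
    (hk : k ≤ tFace m w a) : w k 0 ≤ a := by
  by_contra! hlt
  obtain ⟨t, ht, hface⟩ := hw.exists_mem_faceH_of_mem_uIcc ha (Nat.zero_le k)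
    (fun t ht => htube t ht.2) (Set.mem_uIcc_of_le h0 hlt.le)
  have htk : t = k := le_antisymm ht.2 (hk.trans (Nat.sInf_le hface))
  exact hlt.ne' (htk ▸ hface.1)

lemma apply_tFace_coord {a : ℝ} (h : hitsFace m w a) : w (tFace m w a) 0 = a :=
  (Nat.sInf_mem h).1

lemma qTube_pos : 0 < qTube m m₀ := by
  unfold qTube
  positivity

lemma qTube_lt (h : 1 ≤ m₀) : qTube m m₀ < (2 : ℝ) ^ (-(m : ℤ)) :=
  zpow_lt_zpow_right₀ (by norm_num) (by omega)

lemma aTube_mem_dyadicGrid (h : m ≤ n) (l : ℕ) : aTube m l ∈ dyadicGrid n := by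
  have := zsmul_mem (two_zpow_neg_mem_dyadicGrid h) (2 * l - 1)
  rwa [zsmul_eq_mul, mul_comm, Int.cast_sub, Int.cast_mul, Int.cast_ofNat, Int.cast_natCast,
    Int.cast_one] at this

lemma aTube_add_qTube_mem_dyadicGrid (h : m + m₀ ≤ n) (l : ℕ) :
    aTube m l + qTube m m₀ ∈ dyadicGrid n :=
  add_mem (aTube_mem_dyadicGrid (by omega) l) (by simpa [qTube] using two_zpow_neg_mem_dyadicGrid h)

variable {i : ℕ}

lemma eventAi_of_eventFtube (hF : eventFtube m m₀ w i) {l : ℕ} (hl : 1 ≤ l) (hli : l ≤ i) :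
    eventAi m m₀ w l := by
  obtain ⟨l, rfl⟩ := Nat.exists_eq_add_of_le' hl
  exact hF _ hli

lemma tFace_le_tFace (hF : eventFtube m m₀ w i) {l l' : ℕ} (hl : 1 ≤ l) (hll' : l ≤ l')
    (hl' : l' ≤ i + 1) : tFace m w (aTube m l) ≤ tFace m w (aTube m l') := by
  induction l', hll' using Nat.le_induction with
  | base => exact le_rfl
  | succ l' hll' ih =>
    exact (ih (by omega)).trans (eventAi_of_eventFtube hF (by omega) (by omega)).2.2.1.le

lemma coord_le_aTube_and_inTube (hF : eventFtube m m₀ w i) {l k : ℕ} (hl : 1 ≤ l)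
    (hli : l ≤ i + 1) (hk : k ≤ tFace m w (aTube m l)) : w k 0 ≤ aTube m l ∧ InTube m (w k) := by
  induction l, hl using Nat.le_induction generalizing k with
  | base =>
    obtain ⟨-, h, ht⟩ := (hF 0 (Nat.zero_le i)).2.2.1 k hk
    exact ⟨h, ht⟩
  | succ l hl ih =>
    rcases le_or_gt k (tFace m w (aTube m l)) with hkl | hkl
    · obtain ⟨h, ht⟩ := ih (by omega) hkl
      exact ⟨h.trans (aTube_mono m l.le_succ), ht⟩
    · obtain ⟨-, h, ht⟩ := (eventAi_of_eventFtube hF hl (by omega)).2.2.2.2.1 k hkl.le hk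
      exact ⟨h, ht⟩

lemma aTube_sub_qTube_lt_coord (hF : eventFtube m m₀ w i) {l l' k : ℕ} (hl : 1 ≤ l) (hll' : l ≤ l')
    (hl' : l' ≤ i + 1) (hk : tFace m w (aTube m l) < k) (hk' : k ≤ tFace m w (aTube m l')) :
    aTube m l - qTube m m₀ < w k 0 := by
  induction l', hll' using Nat.le_induction with
  | base => omega
  | succ l' hll' ih =>
    rcases le_or_gt k (tFace m w (aTube m l')) with hkl | hkl
    · exact ih (by omega) hkl
    · have := ((eventAi_of_eventFtube hF (by omega) (by omega)).2.2.2.2.1 k hkl.le hk').1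
      linarith [aTube_mono m hll']

end Tube

namespace NiceCutTime

variable {n m m₀ : ℕ} {w : ℕ → E3} {i r c : ℕ}

lemma tFace_lt (hF : eventFtube m m₀ w i) (hr : 1 ≤ r) (hri : r ≤ i)
    (hc : NiceCutTime m m₀ w r c) : tFace m w (aTube m r) < c :=
  not_le.mp fun h => by
    have := (coord_le_aTube_and_inTube hF hr (by omega) h).1
    linarith [hc.2.2.2.1.1, qTube_pos (m := m) (m₀ := m₀)]

lemma coord_le (hw : IsNearestNeighbourPath n w) (hmn : m + m₀ ≤ n) (hF : eventFtube m m₀ w i)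
    (hr : 1 ≤ r) (hri : r ≤ i) (hc : NiceCutTime m m₀ w r c) {k : ℕ} (hkc : k ≤ c)
    (hk : k ≤ tFace m w (aTube m (r + 1))) : w k 0 ≤ aTube m r + qTube m m₀ := by
  refine hw.coord_le_of_le_tFace (aTube_add_qTube_mem_dyadicGrid hmn r)
    (fun t ht => (coord_le_aTube_and_inTube hF (by omega) (by omega) (ht.trans hk)).2) ?_
    (hkc.trans hc.2.1)
  linarith [(coord_le_aTube_and_inTube hF hr (by omega) (Nat.zero_le _)).1,
    qTube_pos (m := m) (m₀ := m₀)]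

lemma lt_tFace_succ (hw : IsNearestNeighbourPath n w) (hmn : m + m₀ ≤ n)
    (hq : qTube m m₀ < (2 : ℝ) ^ (-(m : ℤ))) (hF : eventFtube m m₀ w i) (hr : 1 ≤ r)
    (hri : r ≤ i) (hc : NiceCutTime m m₀ w r c) : c < tFace m w (aTube m (r + 1)) := by
  by_contra! h
  have := hc.coord_le hw hmn hF hr hri h le_rfl
  rw [apply_tFace_coord (eventAi_of_eventFtube hF hr hri).2.1, aTube_succ] at this
  linarith [show (0 : ℝ) < 2 ^ (-(m : ℤ)) by positivity]

lemma lt_coord (hw : IsNearestNeighbourPath n w) (hmn : m + m₀ ≤ n) (hF : eventFtube m m₀ w i)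
    (hr : 1 ≤ r) (hri : r ≤ i) (hc : NiceCutTime m m₀ w r c) {j : ℕ} (hcj : c < j)
    (hj : j ≤ tFace m w (aTube m (r + 1))) : aTube m r < w j 0 := by
  by_contra! h
  obtain ⟨t, ht, hface⟩ := hw.exists_mem_faceH_of_mem_uIcc (aTube_mem_dyadicGrid (by omega) r)
    hcj.le (fun t ht => (coord_le_aTube_and_inTube hF (by omega) (by omega) (ht.2.trans hj)).2)
    (Set.mem_uIcc_of_ge h (by linarith [hc.2.2.2.1.1, qTube_pos (m := m) (m₀ := m₀)]))
  exact hc.2.2.2.2 t ht.1 (ht.2.trans hj) hface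

lemma isCutTime (hw : IsNearestNeighbourPath n w) (hmn : m + m₀ ≤ n)
    (hq : qTube m m₀ < (2 : ℝ) ^ (-(m : ℤ))) (hF : eventFtube m m₀ w i) (hr : 1 ≤ r)
    (hri : r ≤ i) (hc : NiceCutTime m m₀ w r c) :
    IsCutTime w c (tFace m w (aTube m (i + 1))) := by
  intro j₁ hj₁ j₂ hcj₂ hj₂ heq
  have hcT := hc.lt_tFace_succ hw hmn hq hF hr hri
  have hx : w j₁ 0 = w j₂ 0 := congrArg (· 0) heq
  rcases le_or_gt j₂ (tFace m w (aTube m (r + 1))) with h₂ | h₂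
  · rcases le_or_gt (tFace m w (aTube m r)) j₁ with h₁ | h₁
    · exact hc.2.2.1 j₁ j₂ h₁ hj₁ hcj₂ h₂ heq
    · linarith [(coord_le_aTube_and_inTube hF hr (by omega) h₁.le).1,
        hc.lt_coord hw hmn hF hr hri hcj₂ h₂]
  · linarith [hc.coord_le hw hmn hF hr hri hj₁ (by omega), aTube_succ m r,
      aTube_sub_qTube_lt_coord hF (by omega) (by omega) le_rfl h₂ hj₂]

lemma mem_slabOC (hw : IsNearestNeighbourPath n w) (hmn : m + m₀ ≤ n)
    (hq : qTube m m₀ < (2 : ℝ) ^ (-(m : ℤ))) (hF : eventFtube m m₀ w i) (hr : 1 ≤ r)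
    (hri : r ≤ i) (hc : NiceCutTime m m₀ w r c) {k : ℕ} (hk : tFace m w (aTube m r) < k)
    (hkc : k ≤ c) : w k ∈ slabOC m (aTube m r - qTube m m₀) (aTube m r + qTube m m₀) := by
  have hcT := hc.lt_tFace_succ hw hmn hq hF hr hri
  obtain ⟨h, -, ht⟩ := (eventAi_of_eventFtube hF hr hri).2.2.2.2.1 k hk.le (by omega)
  exact ⟨h, hc.coord_le hw hmn hF hr hri hkc (by omega), ht⟩

end NiceCutTime

lemma le_add_sum_Icc_of_le_add {M : Type*} [AddCommMonoid M] [PartialOrder M]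
    [IsOrderedAddMonoid M] {f g : ℕ → M} {i : ℕ} (h : ∀ r, 1 ≤ r → r ≤ i → f (r + 1) ≤ f r + g r) :
    f (i + 1) ≤ f 1 + ∑ r ∈ Finset.Icc 1 i, g r := by
  induction i with
  | zero => simp
  | succ i ih =>
    rw [Finset.sum_Icc_succ_top (by omega), ← add_assoc]
    exact (h _ (by omega) le_rfl).trans
      (add_le_add (ih fun r hr hri => h r hr (by omega)) le_rfl)

lemma lt_of_two_zpow_neg_lt_exp_neg {n k : ℕ} {x : ℝ} (hkx : (k : ℝ) ≤ x)
    (h : (2 : ℝ) ^ (-(n : ℤ)) < Real.exp (-x)) : k < n := by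
  have hexp : Real.exp (-x) ≤ (2 : ℝ) ^ (-(k : ℤ)) :=
    calc Real.exp (-x) ≤ Real.exp (-k) := Real.exp_le_exp.mpr (by linarith)
      _ = (Real.exp 1 ^ k)⁻¹ := by rw [Real.exp_neg, Real.exp_one_pow]
      _ ≤ (2 ^ k)⁻¹ := by
        gcongr
        linarith [Real.add_one_le_exp 1]
      _ = (2 : ℝ) ^ (-(k : ℤ)) := by rw [zpow_neg, zpow_natCast]
  have := (zpow_lt_zpow_iff_right₀ (by norm_num : (1 : ℝ) < 2)).mp (h.trans_le hexp)
  omega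

lemma cast_add_le_two_rpow {m m₀ : ℕ} (hm₀ : 10 ≤ m₀) (hm : m = m₀ ^ 10) :
    ((m + m₀ : ℕ) : ℝ) ≤ (2 : ℝ) ^ ((m : ℝ) ^ 100) := by
  have hm₀m : m₀ ≤ m := hm ▸ Nat.le_self_pow (by norm_num) m₀
  have h2m : 2 * m ≤ m ^ 100 :=
    calc 2 * m ≤ m ^ 2 := by nlinarith
      _ ≤ m ^ 100 := Nat.pow_le_pow_right (by omega) (by norm_num)
  have : m + m₀ ≤ 2 ^ (m ^ 100) := by
    have := Nat.lt_two_pow_self (n := m ^ 100)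
    omega
  calc ((m + m₀ : ℕ) : ℝ) ≤ ((2 ^ (m ^ 100) : ℕ) : ℝ) := by exact_mod_cast this
    _ = (2 : ℝ) ^ ((m : ℝ) ^ 100) := by
      rw [← Nat.cast_pow m 100, Real.rpow_natCast]
      push_cast
      rfl

theorem lerw_length_decomposition_on_tube_general
    (n m m₀ : ℕ) (hm₀ : 10 ≤ m₀) (hm : m = m₀ ^ 10)
    (hn : (2 : ℝ) ^ (-(n : ℤ)) < Real.exp (-(2 : ℝ) ^ ((m : ℝ) ^ 100)))
    (w : ℕ → E3)
    (hwlat : ∀ k, IsLatticePoint n (w k))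
    (hwstep : ∀ k, w (k + 1) - w k ∈ nbhdSteps n)
    (i : ℕ)
    (hF : eventFtube m m₀ w i) (hG : eventGtube m m₀ w i) :
    xiLen m w i ≤
        xiLen m w 0 + ∑ l ∈ Finset.Icc 1 i, (lamTubeLen m w l + xiSlabCount m m₀ w i l) ∧
      xiLen m w 0 + ∑ l ∈ Finset.Icc 1 i, (lamTubeLen m w l + xiSlabCount m m₀ w i l) =
        (xiLen m w 0 + ∑ l ∈ Finset.Icc 1 i, lamTubeLen m w l) +
          ∑ l ∈ Finset.Icc 1 i, xiSlabCount m m₀ w i l := by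
  have hw : IsNearestNeighbourPath n w := ⟨hwlat, hwstep⟩
  have hmn : m + m₀ ≤ n := (lt_of_two_zpow_neg_lt_exp_neg (cast_add_le_two_rpow hm₀ hm) hn).le
  have hq : qTube m m₀ < (2 : ℝ) ^ (-(m : ℤ)) := qTube_lt (by omega)
  refine ⟨le_add_sum_Icc_of_le_add (f := fun l => leLen w (tFace m w (aTube m l)))
    fun r hr hri => ?_, by rw [Finset.sum_add_distrib, add_assoc]⟩
  obtain ⟨c, hc⟩ := hG r hr hri
  exact leLen_le_of_isCutTime (hc.tFace_lt hF hr hri).le (hc.lt_tFace_succ hw hmn hq hF hr hri)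
    (tFace_le_tFace hF (by omega) (by omega) le_rfl) (hc.isCutTime hw hmn hq hF hr hri)
    fun k hk hkc => hc.mem_slabOC hw hmn hq hF hr hri hk hkc

/-- Suppose the walk path `w` realizes the events `F_i ∩ G_i`
(as deterministic conditions on the path).  Then
`len(ξ_i) ≤ len(ξ₀) + Σ_{l=1}^i (len(λ_l) + |ξ_i ∩ H(a_l - q, a_l + q]|)`, which equals
`len(ξ'_i) + Σ_{l=1}^i |ξ_i ∩ H(a_l - q, a_l + q]|` since the concatenation
`ξ'_i = ξ₀ ⊕ λ₁ ⊕ ⋯ ⊕ λ_i` has length `len(ξ₀) + Σ_{l=1}^i len(λ_l)`. -/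
theorem lerw_length_decomposition_on_tube
    (n m m₀ : ℕ) (hm₀ : 10 ≤ m₀) (hm : m = m₀ ^ 10)
    (hn : (2 : ℝ) ^ (-(n : ℤ)) < Real.exp (-(2 : ℝ) ^ ((m : ℝ) ^ 100)))
    (w : ℕ → E3) (hw0 : w 0 = 0)
    (hwlat : ∀ k, IsLatticePoint n (w k))
    (hwstep : ∀ k, w (k + 1) - w k ∈ nbhdSteps n)
    (i : ℕ) (hi : 1 ≤ i)
    (hfin : hitsFace m w (aTube m (i + 1)))
    (hF : eventFtube m m₀ w i) (hG : eventGtube m m₀ w i) :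
    xiLen m w i ≤
        xiLen m w 0 + ∑ l ∈ Finset.Icc 1 i, (lamTubeLen m w l + xiSlabCount m m₀ w i l) ∧
      xiLen m w 0 + ∑ l ∈ Finset.Icc 1 i, (lamTubeLen m w l + xiSlabCount m m₀ w i l) =
        (xiLen m w 0 + ∑ l ∈ Finset.Icc 1 i, lamTubeLen m w l) +
          ∑ l ∈ Finset.Icc 1 i, xiSlabCount m m₀ w i l :=
  lerw_length_decomposition_on_tube_general n m m₀ hm₀ hm hn w hwlat hwstep i hF hG
end

section
/- Let λ be a finite nearest-neighbour path in 2^{−n}ℤ³ and γ = LE(λ) its loop erasure. For r > 0 and a path μ define σ₀^μ = 0, σ_l^μ = inf{j ≥ σ_{l−1}^μ : |μ(j) − μ(σ_{l−1}^μ)| ≥ r} for l ≥ 1, and let N_r(μ) be the largest l with σ_l^μ ≤ len(μ) (and 0 if there is none). Then for every r > 0, N_r(γ) ≤ N_{r/3}(λ). -/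
open MeasureTheory ProbabilityTheory Filter Set
open scoped ENNReal NNReal

/-!
The loop erasure `γ = w ∘ s` only looks at `w` along the increasing times `s₀ < s₁ < ⋯`, so it
suffices to compare the displacement count of a monotone time change of `w` with that of `w`.
If `γ` moves by `r` between two consecutive displacement times, i.e. `‖w b - w a‖ ≥ r` for
some `a ≤ b`, then the greedy `ρ`-sequence of `w` (with `2ρ ≤ r`) must have a time in `(a, b]`:
otherwise both `w a` and `w b` would lie within `ρ` of `w σ_J` for the last greedy time
`σ_J ≤ b`. Hence each displacement time of `γ` forces a new displacement time of `w`.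
-/

section HitSeq

variable {w : ℕ → E3} {m : ℕ} {ρ : ℝ}

def HitsUpTo (w : ℕ → E3) (m : ℕ) (ρ : ℝ) (l : ℕ) : Prop :=
  ∀ i < l, hitSeq w m ρ i < hitSeq w m ρ (i + 1)

theorem HitsUpTo.mono {k l : ℕ} (hl : HitsUpTo w m ρ l) (hkl : k ≤ l) : HitsUpTo w m ρ k :=
  fun i hi => hl i (hi.trans_le hkl)

theorem HitsUpTo.strictMonoOn {l : ℕ} (hl : HitsUpTo w m ρ l) :
    StrictMonoOn (hitSeq w m ρ) (Iic l) :=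
  strictMonoOn_Iic_of_lt_succ hl

theorem hitSeq_succ_le {l t : ℕ} (hlt : hitSeq w m ρ l ≤ t) (htm : t ≤ m)
    (hfar : ρ ≤ ‖w t - w (hitSeq w m ρ l)‖) : hitSeq w m ρ (l + 1) ≤ t :=
  Nat.sInf_le ⟨hlt, htm, hfar⟩

theorem hitSeq_succ_spec {l : ℕ} (hl : hitSeq w m ρ l < hitSeq w m ρ (l + 1)) :
    hitSeq w m ρ (l + 1) ≤ m ∧ ρ ≤ ‖w (hitSeq w m ρ (l + 1)) - w (hitSeq w m ρ l)‖ := by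
  have hne : {j | hitSeq w m ρ l ≤ j ∧ j ≤ m ∧ ρ ≤ ‖w j - w (hitSeq w m ρ l)‖}.Nonempty := by
    by_contra hempty
    simp only [hitSeq, not_nonempty_iff_eq_empty.mp hempty, Nat.sInf_empty] at hl
    omega
  exact (Nat.sInf_mem hne).2

theorem HitsUpTo.hitSeq_le {l : ℕ} (hl : HitsUpTo w m ρ l) : hitSeq w m ρ l ≤ m := by
  cases l with
  | zero => exact Nat.zero_le m
  | succ l => exact (hitSeq_succ_spec (hl l l.lt_succ_self)).1

theorem HitsUpTo.le_bound {l : ℕ} (hl : HitsUpTo w m ρ l) : l ≤ m :=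
  (hl.strictMonoOn.Iic_id_le l le_rfl).trans hl.hitSeq_le

theorem HitsUpTo.succ_of_far (hρ : 0 < ρ) {l t : ℕ} (hl : HitsUpTo w m ρ l)
    (hlt : hitSeq w m ρ l ≤ t) (htm : t ≤ m) (hfar : ρ ≤ ‖w t - w (hitSeq w m ρ l)‖) :
    HitsUpTo w m ρ (l + 1) ∧ hitSeq w m ρ (l + 1) ≤ t := by
  have hmem := Nat.sInf_mem (s := {j | hitSeq w m ρ l ≤ j ∧ j ≤ m ∧
    ρ ≤ ‖w j - w (hitSeq w m ρ l)‖}) ⟨t, hlt, htm, hfar⟩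
  obtain ⟨hle, -, hρle⟩ : hitSeq w m ρ l ≤ hitSeq w m ρ (l + 1) ∧ hitSeq w m ρ (l + 1) ≤ m ∧
      ρ ≤ ‖w (hitSeq w m ρ (l + 1)) - w (hitSeq w m ρ l)‖ := hmem
  have hlt_succ : hitSeq w m ρ l < hitSeq w m ρ (l + 1) := by
    refine hle.lt_of_ne fun heq => ?_
    rw [← heq, sub_self, norm_zero] at hρle
    linarith
  refine ⟨fun i hi => ?_, hitSeq_succ_le hlt htm hfar⟩
  rcases Nat.lt_succ_iff_lt_or_eq.mp hi with hi | rfl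
  exacts [hl i hi, hlt_succ]

theorem bddAbove_hitsUpTo : BddAbove {l | HitsUpTo w m ρ l} :=
  ⟨m, fun _ hl => HitsUpTo.le_bound hl⟩

theorem hitsUpTo_hitCount : HitsUpTo w m ρ (hitCount w m ρ) :=
  Nat.sSup_mem ⟨0, fun _ hi => absurd hi (Nat.not_lt_zero _)⟩ bddAbove_hitsUpTo

theorem le_hitCount {l : ℕ} (hl : HitsUpTo w m ρ l) : l ≤ hitCount w m ρ :=
  le_csSup bddAbove_hitsUpTo hl

theorem exists_hitsUpTo_gt_of_far (hρ : 0 < ρ) {r : ℝ} (hρr : 2 * ρ ≤ r) {j a b : ℕ}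
    (hj : HitsUpTo w m ρ j) (hja : hitSeq w m ρ j ≤ a) (hab : a ≤ b) (hbm : b ≤ m)
    (hfar : r ≤ ‖w b - w a‖) :
    ∃ j', j < j' ∧ HitsUpTo w m ρ j' ∧ hitSeq w m ρ j' ≤ b := by
  set T := {j' | HitsUpTo w m ρ j' ∧ hitSeq w m ρ j' ≤ b}
  have hTbdd : BddAbove T := bddAbove_hitsUpTo.mono fun _ h => h.1
  obtain ⟨hJ, hJb⟩ : sSup T ∈ T := Nat.sSup_mem ⟨j, hj, hja.trans hab⟩ hTbdd
  set J := sSup T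
  have hnear : ∀ t, hitSeq w m ρ J ≤ t → t ≤ b → ‖w t - w (hitSeq w m ρ J)‖ < ρ := by
    intro t hJt htb
    by_contra! hfar_t
    obtain ⟨hJ1, hJ1t⟩ := hJ.succ_of_far hρ hJt (htb.trans hbm) hfar_t
    have : J + 1 ≤ J := le_csSup hTbdd ⟨hJ1, hJ1t.trans htb⟩
    omega
  have haJ : a < hitSeq w m ρ J := by
    by_contra! hJa
    have := norm_sub_le_norm_sub_add_norm_sub (w b) (w (hitSeq w m ρ J)) (w a)
    rw [norm_sub_rev (w (hitSeq w m ρ J))] at this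
    linarith [hnear a hJa hab, hnear b (hJa.trans hab) le_rfl]
  refine ⟨J, ?_, hJ, hJb⟩
  by_contra! hJj
  have := hj.strictMonoOn.monotoneOn (mem_Iic.2 hJj) (mem_Iic.2 le_rfl) hJj
  omega

theorem hitCount_comp_le {s : ℕ → ℕ} {L : ℕ} (hs : MonotoneOn s (Iic L)) (hsm : s L ≤ m)
    {r : ℝ} (hρ : 0 < ρ) (hρr : 2 * ρ ≤ r) :
    hitCount (w ∘ s) L r ≤ hitCount w m ρ := by
  set N := hitCount (w ∘ s) L r
  set τ := hitSeq (w ∘ s) L r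
  have hN : HitsUpTo (w ∘ s) L r N := hitsUpTo_hitCount
  have hτL : ∀ l ≤ N, τ l ∈ Iic L := fun l hl => (hN.mono hl).hitSeq_le
  have key : ∀ l ≤ N, ∃ j, l ≤ j ∧ HitsUpTo w m ρ j ∧ hitSeq w m ρ j ≤ s (τ l) := by
    intro l hl
    induction l with
    | zero => exact ⟨0, le_rfl, fun _ hi => absurd hi (Nat.not_lt_zero _), Nat.zero_le _⟩
    | succ l ih =>
      obtain ⟨j, hlj, hj, hja⟩ := ih (by omega)
      have hτ : τ l < τ (l + 1) := hN l hl
      have hab := hs (hτL l (by omega)) (hτL (l + 1) hl) hτ.le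
      have hbm := (hs (hτL (l + 1) hl) (mem_Iic.2 le_rfl) (hτL (l + 1) hl)).trans hsm
      obtain ⟨j', hjj', hj', hj'b⟩ :=
        exists_hitsUpTo_gt_of_far hρ hρr hj hja hab hbm (hitSeq_succ_spec hτ).2
      exact ⟨j', by omega, hj', hj'b⟩
  obtain ⟨j, hNj, hj, -⟩ := key N le_rfl
  exact hNj.trans (le_hitCount hj)

end HitSeq

theorem leTime_le (w : ℕ → E3) (m i : ℕ) : leTime w m i ≤ m := by
  cases i <;> exact csSup_le' fun _ hj => hj.1

theorem leTime_lt_leTime_succ {w : ℕ → E3} {m i : ℕ} (hi : i < leLen w m) :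
    leTime w m i < leTime w m (i + 1) := by
  have hne : w (leTime w m i) ≠ w m := Nat.notMem_of_lt_sInf hi
  have hlt : leTime w m i < m :=
    (leTime_le w m i).lt_of_ne fun h => hne (congrArg w h)
  exact (Nat.lt_succ_self _).trans_le (le_csSup ⟨m, fun _ hj => hj.1⟩ ⟨hlt, rfl⟩)

theorem strictMonoOn_leTime (w : ℕ → E3) (m : ℕ) :
    StrictMonoOn (leTime w m) (Iic (leLen w m)) :=
  strictMonoOn_Iic_of_lt_succ fun _ hi => leTime_lt_leTime_succ hi

theorem displacement_count_of_loop_erasure_le_general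
    (w : ℕ → E3) (m : ℕ)
    (r : ℝ) (hr : 0 < r) :
    hitCount (leFun w m) (leLen w m) r ≤ hitCount w m (r / 3) :=
  hitCount_comp_le (s := leTime w m) (strictMonoOn_leTime w m).monotoneOn
    (leTime_le w m _) (by positivity) (by linarith)

/-- Let `γ = LE(λ)` be the loop erasure of a finite nearest-neighbour
path `λ` in `2^{-n}ℤ³`, and for `r > 0` let `N_r(μ)` be the number of greedy
`r`-displacement times of a path `μ`.  Then `N_r(γ) ≤ N_{r/3}(λ)` for every `r > 0`. -/
theorem displacement_count_of_loop_erasure_le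
    (n : ℕ) (w : ℕ → E3) (m : ℕ)
    (hwlat : ∀ k, IsLatticePoint n (w k))
    (hwstep : ∀ k < m, w (k + 1) - w k ∈ nbhdSteps n)
    (r : ℝ) (hr : 0 < r) :
    hitCount (leFun w m) (leLen w m) r ≤ hitCount w m (r / 3) :=
  displacement_count_of_loop_erasure_le_general w m r hr
end
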